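/- arXiv:cs/0208004 — 2 statements merged into one kernel-verified Lean document; each statement's English description precedes it below -/
import Mathlib

section
/- If B and A are sequences of integers with cost(B) < 0, cost(A) < 0, and height(B) ≤ height(A), then for any sequences S₁, S₂, height(S₁ B A S₂) ≤ height(S₁ A B S₂). -/
def cost (L : List ℤ) : ℤ := L.sum

def height (L : List ℤ) : ℤ :=
  ((List.range (L.length + 1)).map fun k => (L.take k).sum).foldr max 0

def fall (L : List ℤ) : ℤ := height L - cost L

lemma foldr_max_swap (l : List ℤ) (a b : ℤ) :
    max (l.foldr max a) b = max (l.foldr max b) a := by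
  induction l with
  | nil => simp [max_comm]
  | cons c l ih =>
      simp only [List.foldr_cons]
      rw [max_assoc, ih, max_assoc]

lemma foldr_max_map_add (x : ℤ) (l : List ℤ) (b : ℤ) :
    (l.map (x + ·)).foldr max (x + b) = x + l.foldr max b := by
  induction l with
  | nil => simp
  | cons c l ih =>
      simp only [List.map_cons, List.foldr_cons, ih]
      omega

lemma foldr_max_nonneg (l : List ℤ) : 0 ≤ l.foldr max 0 := by
  induction l with
  | nil => simp
  | cons c l ih => simp only [List.foldr_cons]; omega

lemma height_nonneg (L : List ℤ) : 0 ≤ height L := foldr_max_nonneg _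

lemma height_nil : height ([] : List ℤ) = 0 := rfl

lemma height_cons (x : ℤ) (L : List ℤ) :
    height (x :: L) = max 0 (x + height L) := by
  unfold height
  simp only [List.length_cons]
  rw [show L.length + 1 + 1 = (L.length + 1) + 1 from rfl,
    List.range_succ_eq_map]
  simp only [List.map_cons, List.map_map, List.take_zero, List.sum_nil,
    List.foldr_cons]
  have h1 : ((List.range (L.length + 1)).map fun k => ((x :: L).take (k + 1)).sum)
      = ((List.range (L.length + 1)).map fun k => (L.take k).sum).map (x + ·) := by
    simp [List.map_map, Function.comp]
  have h2 : ((List.range (L.length + 1)).map ((fun k => ((x :: L).take k).sum) ∘ Nat.succ))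
      = ((List.range (L.length + 1)).map fun k => (L.take k).sum).map (x + ·) := by
    simp [List.map_map, Function.comp]
  rw [h2]
  set l := (List.range (L.length + 1)).map fun k => (L.take k).sum with hl
  have h0 : (l.map (x + ·)).foldr max (x + 0) = x + l.foldr max 0 :=
    foldr_max_map_add x l 0
  rw [add_zero] at h0
  have := foldr_max_swap (l.map (x + ·)) 0 x
  have hnn : 0 ≤ l.foldr max 0 := foldr_max_nonneg l
  have hx : ∃ t, l = 0 :: t := by
    rw [hl, List.range_succ_eq_map]; simp
  obtain ⟨t, ht⟩ := hx
  have hxle : x ≤ (l.map (x + ·)).foldr max 0 := by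
    rw [ht]; simp only [List.map_cons, List.foldr_cons, add_zero]
    exact le_max_left _ _
  omega

lemma height_append (X Y : List ℤ) :
    height (X ++ Y) = max (height X) (cost X + height Y) := by
  induction X with
  | nil =>
      simp [height_nil, cost, max_eq_right (height_nonneg Y)]
  | cons x X ih =>
      simp only [List.cons_append, height_cons, ih, cost, List.sum_cons]
      have := height_nonneg Y
      omega

lemma cost_append (X Y : List ℤ) : cost (X ++ Y) = cost X + cost Y := by
  simp [cost]

theorem exchange_neg_neg (B A S₁ S₂ : List ℤ)
    (hB : cost B < 0) (hA : cost A < 0) (hBA : height B ≤ height A) :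
    height (S₁ ++ B ++ A ++ S₂) ≤ height (S₁ ++ A ++ B ++ S₂) := by
  simp only [height_append, cost_append]
  omega
end

section
/- In the hump decomposition of a chain C: if H₁ precedes H₂ and cost(H₁) ≥ 0, then cost(H₂) ≥ 0 and fall(H₁) > fall(H₂); if cost(H₂) < 0, then cost(H₁) < 0 and height(H₁) < height(H₂). -/
/-- `H` is a hump: it has a useful peak at index `k`. -/
def IsHump (H : List ℤ) : Prop :=
  H ≠ [] ∧ ∃ k < H.length,
    (∀ m < H.length, (H.take (m + 1)).sum ≤ (H.take (k + 1)).sum) ∧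
    (∀ m < k, 0 ≤ (H.take (m + 1)).sum) ∧
    (∀ m, k < m → m < H.length → cost H ≤ (H.take (m + 1)).sum)

/-- Monotonicity property of the canonical hump decomposition. -/
def StdMono (H₁ H₂ : List ℤ) : Prop :=
  (0 ≤ cost H₁ → 0 ≤ cost H₂ ∧ fall H₂ < fall H₁) ∧
  (cost H₂ < 0 → cost H₁ < 0 ∧ height H₁ < height H₂)

/-- `D` is the canonical hump decomposition of the chain `C`: a partition into
consecutive humps, no two adjacent of which can be merged into a single hump,
satisfying the monotonicity properties. -/
def IsDecomp (C : List ℤ) (D : List (List ℤ)) : Prop :=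
  D.flatten = C ∧ (∀ H ∈ D, IsHump H) ∧ D.Pairwise StdMono ∧
    List.Chain' (fun H₁ H₂ => ¬ IsHump (H₁ ++ H₂)) D

/-
A hump has a peak prefix sum `p` with `cost ≤ p` and `height = max p 0`. If the later hump `H₂`
has nonpositive cost and its peak, lifted by `cost H₁`, does not exceed `p₁`, then `H₁ ++ H₂` is a
hump peaking at `H₁`'s peak; if `H₁` has nonnegative cost and `p₁ ≤ cost H₁ + p₂`, it is a hump
peaking at `H₂`'s peak. Maximality of adjacent humps rules out both merges, and the resulting strict
inequalities between `p₁`, `p₂` and the costs are exactly the monotonicity of falls and heights.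
This relation is transitive, so it spreads from adjacent humps to all pairs.
-/

theorem List.foldr_max_le_iff {α : Type*} [LinearOrder α] {l : List α} {a b : α} :
    l.foldr max a ≤ b ↔ a ≤ b ∧ ∀ x ∈ l, x ≤ b := by
  induction l with
  | nil => simp
  | cons x l ih => simp only [List.foldr_cons, max_le_iff, ih, List.forall_mem_cons]; tauto

theorem height_le_iff {L : List ℤ} {b : ℤ} :
    height L ≤ b ↔ 0 ≤ b ∧ ∀ j ≤ L.length, (L.take j).sum ≤ b := by
  simp [height, List.foldr_max_le_iff]

theorem sum_take_le_height {L : List ℤ} {j : ℕ} (hj : j ≤ L.length) :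
    (L.take j).sum ≤ height L :=
  (height_le_iff.mp le_rfl).2 j hj

theorem forall_sum_take_append {l₁ l₂ : List ℤ} {Q : ℕ → ℤ → Prop}
    (h₁ : ∀ j ≤ l₁.length, Q j (l₁.take j).sum)
    (h₂ : ∀ t ≤ l₂.length, 0 < t → Q (l₁.length + t) (l₁.sum + (l₂.take t).sum)) :
    ∀ j ≤ (l₁ ++ l₂).length, Q j ((l₁ ++ l₂).take j).sum := by
  intro j hj
  rcases le_or_gt j l₁.length with hj₁ | hj₁
  · rw [List.take_append_of_le_length hj₁]
    exact h₁ j hj₁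
  · obtain ⟨t, rfl⟩ := Nat.exists_eq_add_of_le hj₁.le
    rw [List.take_length_add_append, List.sum_append]
    exact h₂ t (by simp only [List.length_append] at hj; omega) (by omega)

/-- The peak condition of `IsHump`, indexed by the prefix length `i = k + 1`. -/
structure IsPeak (H : List ℤ) (i : ℕ) : Prop where
  pos : 0 < i
  le_length : i ≤ H.length
  le_peak : ∀ j ≤ H.length, 0 < j → (H.take j).sum ≤ (H.take i).sum
  nonneg_before : ∀ j ≤ H.length, j < i → 0 ≤ (H.take j).sum
  cost_le_after : ∀ j ≤ H.length, i < j → cost H ≤ (H.take j).sum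

theorem isHump_iff_exists_isPeak {H : List ℤ} : IsHump H ↔ ∃ i, IsPeak H i := by
  constructor
  · rintro ⟨-, k, hk, hpeak, hbefore, hafter⟩
    refine ⟨k + 1, k.succ_pos, hk, ?_, ?_, ?_⟩
    · rintro (_ | m) hm hm₀
      · omega
      · exact hpeak m hm
    · rintro (_ | m) - hm
      · simp
      · exact hbefore m (by omega)
    · rintro (_ | m) hm hkm
      · omega
      · exact hafter m (by omega) hm
  · rintro ⟨i, hpos, hi, hpeak, hbefore, hafter⟩
    obtain ⟨k, rfl⟩ : ∃ k, i = k + 1 := ⟨i - 1, by omega⟩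
    refine ⟨List.ne_nil_of_length_pos (by omega), k, by omega, ?_, ?_, ?_⟩
    · exact fun m hm => hpeak (m + 1) hm m.succ_pos
    · exact fun m hm => hbefore (m + 1) (by omega) (by omega)
    · exact fun m hkm hm => hafter (m + 1) hm (by omega)

namespace IsPeak

variable {H H₁ H₂ : List ℤ} {i i₁ i₂ : ℕ}

theorem cost_le_peak (h : IsPeak H i) : cost H ≤ (H.take i).sum := by
  simpa [cost] using h.le_peak H.length le_rfl (h.pos.trans_le h.le_length)

theorem cost_le_sum_take (h : IsPeak H i) (hc : cost H ≤ 0) {j : ℕ} (hj : j ≤ H.length) :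
    cost H ≤ (H.take j).sum := by
  rcases lt_trichotomy j i with hji | rfl | hij
  · exact hc.trans (h.nonneg_before j hj hji)
  · exact h.cost_le_peak
  · exact h.cost_le_after j hj hij

theorem sum_take_nonneg (h : IsPeak H i) (hc : 0 ≤ cost H) {j : ℕ} (hj : j ≤ H.length) :
    0 ≤ (H.take j).sum := by
  rcases lt_trichotomy j i with hji | rfl | hij
  · exact h.nonneg_before j hj hji
  · exact hc.trans h.cost_le_peak
  · exact hc.trans (h.cost_le_after j hj hij)

theorem height_eq (h : IsPeak H i) : height H = max (H.take i).sum 0 := by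
  refine le_antisymm (height_le_iff.mpr ⟨le_max_right _ _, ?_⟩) ?_
  · rintro (_ | j) hj
    · simp
    · exact le_max_of_le_left (h.le_peak _ hj j.succ_pos)
  · exact max_le (sum_take_le_height h.le_length) (height_le_iff.mp le_rfl).1

theorem append_left (h₁ : IsPeak H₁ i₁) (h₂ : IsPeak H₂ i₂) (hc : cost H₂ ≤ 0)
    (hp : cost H₁ + (H₂.take i₂).sum ≤ (H₁.take i₁).sum) : IsPeak (H₁ ++ H₂) i₁ where
  pos := h₁.pos
  le_length := h₁.le_length.trans (by simp)
  le_peak := by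
    rw [List.take_append_of_le_length h₁.le_length]
    refine forall_sum_take_append (Q := fun j s => 0 < j → s ≤ _) h₁.le_peak ?_
    rintro t ht ht₀ -
    have := h₂.le_peak t ht ht₀
    simp only [cost] at hp
    omega
  nonneg_before := forall_sum_take_append (Q := fun j s => j < i₁ → 0 ≤ s) h₁.nonneg_before
    fun t _ _ ht => absurd ht (by have := h₁.le_length; omega)
  cost_le_after := by
    refine forall_sum_take_append (Q := fun j s => i₁ < j → cost (H₁ ++ H₂) ≤ s) ?_ ?_
    · intro j hj hij
      have := h₁.cost_le_after j hj hij
      simp only [cost, List.sum_append] at this hc ⊢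
      omega
    · intro t ht _ _
      have := h₂.cost_le_sum_take hc ht
      simp only [cost, List.sum_append] at this ⊢
      omega

theorem append_right (h₁ : IsPeak H₁ i₁) (h₂ : IsPeak H₂ i₂) (hc : 0 ≤ cost H₁)
    (hp : (H₁.take i₁).sum ≤ cost H₁ + (H₂.take i₂).sum) :
    IsPeak (H₁ ++ H₂) (H₁.length + i₂) where
  pos := by have := h₂.pos; omega
  le_length := by have := h₂.le_length; simp only [List.length_append]; omega
  le_peak := by
    rw [List.take_length_add_append, List.sum_append]
    refine forall_sum_take_append (Q := fun j s => 0 < j → s ≤ _) ?_ ?_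
    · intro j hj hj₀
      have := h₁.le_peak j hj hj₀
      simp only [cost] at hp
      omega
    · rintro t ht ht₀ -
      have := h₂.le_peak t ht ht₀
      omega
  nonneg_before := by
    refine forall_sum_take_append (Q := fun j s => j < _ → 0 ≤ s) ?_ ?_
    · exact fun j hj _ => h₁.sum_take_nonneg hc hj
    · intro t ht _ hti
      have := h₂.nonneg_before t ht (by omega)
      simp only [cost] at hc
      omega
  cost_le_after := by
    refine forall_sum_take_append (Q := fun j s => _ < j → cost (H₁ ++ H₂) ≤ s) ?_ ?_
    · exact fun j hj hij => absurd hij (by omega)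
    · intro t ht _ hti
      have := h₂.cost_le_after t ht (by omega)
      simp only [cost, List.sum_append] at this ⊢
      omega

end IsPeak

theorem stdMono_of_not_isHump_append {H₁ H₂ : List ℤ} (h₁ : IsHump H₁) (h₂ : IsHump H₂)
    (h : ¬ IsHump (H₁ ++ H₂)) : StdMono H₁ H₂ := by
  obtain ⟨i₁, hp₁⟩ := isHump_iff_exists_isPeak.mp h₁
  obtain ⟨i₂, hp₂⟩ := isHump_iff_exists_isPeak.mp h₂
  have hleft : cost H₂ ≤ 0 → (H₁.take i₁).sum < cost H₁ + (H₂.take i₂).sum := fun hc =>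
    lt_of_not_ge fun hp => h (isHump_iff_exists_isPeak.mpr ⟨_, hp₁.append_left hp₂ hc hp⟩)
  have hright : 0 ≤ cost H₁ → cost H₁ + (H₂.take i₂).sum < (H₁.take i₁).sum := fun hc =>
    lt_of_not_ge fun hp => h (isHump_iff_exists_isPeak.mpr ⟨_, hp₁.append_right hp₂ hc hp⟩)
  have := hp₁.cost_le_peak
  have := hp₂.cost_le_peak
  simp only [StdMono, fall, hp₁.height_eq, hp₂.height_eq]
  omega

theorem StdMono.trans {H₁ H₂ H₃ : List ℤ} (h₁₂ : StdMono H₁ H₂) (h₂₃ : StdMono H₂ H₃) :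
    StdMono H₁ H₃ :=
  ⟨fun hc => ⟨(h₂₃.1 (h₁₂.1 hc).1).1, (h₂₃.1 (h₁₂.1 hc).1).2.trans (h₁₂.1 hc).2⟩,
    fun hc => ⟨(h₁₂.2 (h₂₃.2 hc).1).1, (h₁₂.2 (h₂₃.2 hc).1).2.trans (h₂₃.2 hc).2⟩⟩

instance : Trans StdMono StdMono StdMono := ⟨StdMono.trans⟩

theorem decomp_monotone_general (D : List (List ℤ))
    (hhump : ∀ H ∈ D, IsHump H)
    (hmax : List.Chain' (fun H₁ H₂ => ¬ IsHump (H₁ ++ H₂)) D) :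
    D.Pairwise StdMono :=
  (List.IsChain.imp_of_mem_imp (fun _ _ hH₁ hH₂ =>
    stdMono_of_not_isHump_append (hhump _ hH₁) (hhump _ hH₂)) hmax).pairwise

/-- Monotonicity of the greedy (maximal-hump) decomposition. -/
theorem decomp_monotone (C : List ℤ) (D : List (List ℤ))
    (hjoin : D.flatten = C) (hhump : ∀ H ∈ D, IsHump H)
    (hmax : List.Chain' (fun H₁ H₂ => ¬ IsHump (H₁ ++ H₂)) D) :
    D.Pairwise StdMono :=
  decomp_monotone_general D hhump hmax
end
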